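/- Let C: R^d → R^d satisfy ||C(x) − x|| ≤ q||x|| for all x, with 0 ≤ q ≤ 1. If e, Δ ∈ R^d and e' = Δ + e − C(Δ + e), then ||e'||² ≤ ((1+q²)/2)||e||² + (2q²/(1−q²))||Δ||², provided q < 1. -/
import Mathlib


/-- One step of the error-feedback update: if `C` is a `q`-contractive compressor
with `q < 1`, and `e' = Δ + e − C(Δ + e)`, then
`‖e'‖² ≤ ((1+q²)/2)‖e‖² + (2q²/(1−q²))‖Δ‖²`. -/
theorem error_feedback_step (d : ℕ) (q : ℝ) (hq0 : 0 ≤ q) (hq1 : q < 1)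
    (C : EuclideanSpace ℝ (Fin d) → EuclideanSpace ℝ (Fin d))
    (hC : ∀ x, ‖C x - x‖ ≤ q * ‖x‖)
    (e Δ : EuclideanSpace ℝ (Fin d)) :
    ‖Δ + e - C (Δ + e)‖ ^ 2
      ≤ (1 + q ^ 2) / 2 * ‖e‖ ^ 2 + 2 * q ^ 2 / (1 - q ^ 2) * ‖Δ‖ ^ 2 := by
  have h1 : ‖Δ + e - C (Δ + e)‖ ≤ q * ‖Δ + e‖ := by
    have := hC (Δ + e)
    rwa [norm_sub_rev] at this
  have h2 : ‖Δ + e‖ ≤ ‖Δ‖ + ‖e‖ := norm_add_le _ _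
  have h3 : (0:ℝ) < 1 - q ^ 2 := by nlinarith
  have hL : (0:ℝ) ≤ ‖Δ + e - C (Δ + e)‖ := norm_nonneg _
  have hx : (0:ℝ) ≤ ‖e‖ := norm_nonneg _
  have hz : (0:ℝ) ≤ ‖Δ‖ := norm_nonneg _
  have hn : (0:ℝ) ≤ ‖Δ + e‖ := norm_nonneg _
  have hL2 : ‖Δ + e - C (Δ + e)‖ ^ 2 ≤ q ^ 2 * (‖Δ‖ + ‖e‖) ^ 2 := by
    have hqn : q * ‖Δ + e‖ ≤ q * (‖Δ‖ + ‖e‖) := by nlinarith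
    nlinarith
  rw [div_mul_eq_mul_div, div_mul_eq_mul_div,
    div_add_div _ _ (two_ne_zero) h3.ne', le_div_iff₀ (by positivity)]
  nlinarith [sq_nonneg ((1 - q ^ 2) * ‖e‖ - 2 * q ^ 2 * ‖Δ‖),
    sq_nonneg (‖Δ‖ + ‖e‖), sq_nonneg q, mul_nonneg hx hz, sq_nonneg (q * ‖Δ‖), sq_nonneg (q * ‖e‖)]
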